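/- Let 1 < p < 2 and let a, b ∈ ℝⁿ satisfy ‖a‖_p ≥ 1, ‖b‖_p ≥ 1, and ‖a − b‖_p ≤ 1. Then ‖a + b‖_p^p ≥ 2^p − 1 ≥ 1; in particular ‖a + b‖_p ≥ 1. -/

import Mathlib

/-!
Clarkson's inequality for `p ≤ 2`: writing `|u|^p = (u²)^(p/2)`, concavity of `t ↦ t^(p/2)` bounds
`|x + y|^p + |x - y|^p` by `2 (x² + y²)^(p/2)`, and subadditivity of the same power bounds that by
`2 (|x|^p + |y|^p)`. Applied to `x = a + b`, `y = a - b` and summed over coordinates, it gives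
`2^p (‖a‖_p^p + ‖b‖_p^p) ≤ 2 (‖a + b‖_p^p + ‖a - b‖_p^p)`, and the three norm bounds turn this
into `‖a + b‖_p^p ≥ 2^p - 1`.
-/

open Finset

noncomputable def lpNorm {n : ℕ} (p : ℝ) (x : Fin n → ℝ) : ℝ :=
  (∑ i, |x i| ^ p) ^ (1 / p)

lemma rpow_add_rpow_le_two_mul_rpow_half {q s t : ℝ} (hq₀ : 0 ≤ q) (hq₁ : q ≤ 1)
    (hs : 0 ≤ s) (ht : 0 ≤ t) : s ^ q + t ^ q ≤ 2 * ((s + t) / 2) ^ q := by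
  have h := (Real.concaveOn_rpow hq₀ hq₁).2 (Set.mem_Ici.2 hs) (Set.mem_Ici.2 ht)
    (by norm_num : (0 : ℝ) ≤ 1 / 2) (by norm_num : (0 : ℝ) ≤ 1 / 2) (by norm_num)
  simp only [smul_eq_mul] at h
  rw [show 1 / 2 * s + 1 / 2 * t = (s + t) / 2 by ring] at h
  linarith

lemma abs_rpow_eq_sq_rpow_half (p u : ℝ) : |u| ^ p = (u ^ 2) ^ (p / 2) := by
  rw [← sq_abs, ← Real.rpow_two, ← Real.rpow_mul (abs_nonneg u)]
  ring_nf

lemma abs_add_rpow_add_abs_sub_rpow_le {p : ℝ} (hp₀ : 0 ≤ p) (hp₂ : p ≤ 2) (x y : ℝ) :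
    |x + y| ^ p + |x - y| ^ p ≤ 2 * (|x| ^ p + |y| ^ p) := by
  have hq₀ : 0 ≤ p / 2 := by positivity
  have hq₁ : p / 2 ≤ 1 := by linarith
  simp only [abs_rpow_eq_sq_rpow_half p]
  calc ((x + y) ^ 2) ^ (p / 2) + ((x - y) ^ 2) ^ (p / 2)
      ≤ 2 * (((x + y) ^ 2 + (x - y) ^ 2) / 2) ^ (p / 2) :=
        rpow_add_rpow_le_two_mul_rpow_half hq₀ hq₁ (sq_nonneg _) (sq_nonneg _)
    _ = 2 * (x ^ 2 + y ^ 2) ^ (p / 2) := by ring_nf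
    _ ≤ 2 * ((x ^ 2) ^ (p / 2) + (y ^ 2) ^ (p / 2)) := by
        gcongr
        exact Real.rpow_add_le_add_rpow (sq_nonneg x) (sq_nonneg y) hq₀ hq₁

lemma lpNorm_nonneg {n : ℕ} (p : ℝ) (x : Fin n → ℝ) : 0 ≤ lpNorm p x :=
  Real.rpow_nonneg (sum_nonneg fun _ _ => Real.rpow_nonneg (abs_nonneg _) _) _

lemma lpNorm_rpow {n : ℕ} {p : ℝ} (hp : p ≠ 0) (x : Fin n → ℝ) :
    lpNorm p x ^ p = ∑ i, |x i| ^ p := by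
  rw [lpNorm, ← Real.rpow_mul (sum_nonneg fun _ _ => Real.rpow_nonneg (abs_nonneg _) _),
    one_div_mul_cancel hp, Real.rpow_one]

lemma two_rpow_mul_lpNorm_rpow_add_le {n : ℕ} {p : ℝ} (hp₀ : 0 < p) (hp₂ : p ≤ 2)
    (a b : Fin n → ℝ) :
    2 ^ p * (lpNorm p a ^ p + lpNorm p b ^ p) ≤
      2 * (lpNorm p (a + b) ^ p + lpNorm p (a - b) ^ p) := by
  have hpoint (i : Fin n) :
      2 ^ p * (|a i| ^ p + |b i| ^ p) ≤ 2 * (|a i + b i| ^ p + |a i - b i| ^ p) := by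
    have h := abs_add_rpow_add_abs_sub_rpow_le hp₀.le hp₂ (a i + b i) (a i - b i)
    rwa [show a i + b i + (a i - b i) = 2 * a i by ring,
      show a i + b i - (a i - b i) = 2 * b i by ring, abs_mul, abs_mul, abs_two,
      Real.mul_rpow zero_le_two (abs_nonneg _), Real.mul_rpow zero_le_two (abs_nonneg _),
      ← mul_add] at h
  simp only [lpNorm_rpow hp₀.ne', Pi.add_apply, Pi.sub_apply, ← sum_add_distrib, mul_sum]
  exact sum_le_sum fun i _ => hpoint i

/-- Let `1 < p < 2` and `a, b ∈ ℝⁿ` with `‖a‖_p ≥ 1`, `‖b‖_p ≥ 1`, `‖a − b‖_p ≤ 1`.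
Then `‖a + b‖_p^p ≥ 2^p − 1 ≥ 1`; in particular `‖a + b‖_p ≥ 1`. -/
theorem sum_norm_ge {n : ℕ} (p : ℝ) (hp1 : 1 < p) (hp2 : p < 2)
    (a b : Fin n → ℝ)
    (ha : 1 ≤ lpNorm p a) (hb : 1 ≤ lpNorm p b)
    (hab : lpNorm p (a - b) ≤ 1) :
    lpNorm p (a + b) ^ p ≥ 2 ^ p - 1 ∧ (2 : ℝ) ^ p - 1 ≥ 1 ∧
      lpNorm p (a + b) ≥ 1 := by
  have hp0 : 0 < p := by linarith
  have hclarkson := two_rpow_mul_lpNorm_rpow_add_le hp0 hp2.le a b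
  have ha' : 1 ≤ lpNorm p a ^ p := Real.one_le_rpow ha hp0.le
  have hb' : 1 ≤ lpNorm p b ^ p := Real.one_le_rpow hb hp0.le
  have hab' : lpNorm p (a - b) ^ p ≤ 1 := Real.rpow_le_one (lpNorm_nonneg p _) hab hp0.le
  have htwo : (2 : ℝ) ≤ 2 ^ p := by
    simpa using Real.rpow_le_rpow_of_exponent_le one_le_two hp1.le
  have hsum : 2 ^ p - 1 ≤ lpNorm p (a + b) ^ p := by
    have : 2 ^ p * 2 ≤ 2 ^ p * (lpNorm p a ^ p + lpNorm p b ^ p) := by gcongr; linarith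
    linarith
  refine ⟨hsum, by linarith, ?_⟩
  rw [ge_iff_le, ← Real.rpow_le_rpow_iff zero_le_one (lpNorm_nonneg p _) hp0, Real.one_rpow]
  linarith
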